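/- Let (Y₁, Y₂) follow the bivariate zero-inflated Poisson log-normal model with parameters (π₁, π₂, μ₁, μ₂, c₁, c₂). Then the covariance of Y₁ and Y₂ satisfies Cov(Y₁, Y₂) = ∑_{y₁,y₂} y₁·y₂·p(y₁,y₂) − E₁·E₂ = E₁·E₂·(e^{σ₁₂} − 1), where σ₁₂ = c₁·c₂ and E_j = π_j·exp(μ_j + ‖c_j‖²/2). -/

import Mathlib

open MeasureTheory ProbabilityTheory Real

/-!
Multiplying by `y₁ y₂` kills the zero-inflation, so conditionally on the latent Gaussian `w` the
two counts contribute the product of two Poisson means `e^{t₁(w)} e^{t₂(w)}`, where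
`t_j(w) = μ_j + c_j · w`. Exchanging sum and integral (all terms are nonnegative) leaves
`π₁ π₂ ∫ e^{t₁ + t₂} dΓ`, the moment generating function of the Gaussian `(c₁ + c₂) · w`, which is
`π₁ π₂ e^{μ₁ + μ₂ + ‖c₁ + c₂‖² / 2} = E₁ E₂ e^{σ₁₂}`.
-/

/-- The joint probability mass function of the bivariate zero-inflated Poisson
log-normal model with parameters (π₁, π₂, μ₁, μ₂, c₁, c₂):
`p(y₁, y₂) = ∫_{ℝ^q} ∏_{j=1,2} [(1−π_j)·1{y_j=0} +
  π_j·exp(−e^{μ_j + c_j·w})·e^{(μ_j + c_j·w)·y_j}/y_j!] dΓ(w)`,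
where `Γ` is the q-fold product of standard Gaussian measures on ℝ.
Here `pr₁`, `pr₂` play the role of the probabilities π₁, π₂. -/
noncomputable def biziplnPMF {q : ℕ} (c₁ c₂ : Fin q → ℝ) (pr₁ pr₂ μ₁ μ₂ : ℝ)
    (y₁ y₂ : ℕ) : ℝ :=
  ∫ w : Fin q → ℝ,
    ((1 - pr₁) * (if y₁ = 0 then 1 else 0) +
      pr₁ * (exp (-exp (μ₁ + ∑ i, c₁ i * w i)) * exp ((μ₁ + ∑ i, c₁ i * w i) * y₁)
        / (Nat.factorial y₁))) *
    ((1 - pr₂) * (if y₂ = 0 then 1 else 0) +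
      pr₂ * (exp (-exp (μ₂ + ∑ i, c₂ i * w i)) * exp ((μ₂ + ∑ i, c₂ i * w i) * y₂)
        / (Nat.factorial y₂)))
    ∂(Measure.pi fun _ : Fin q => gaussianReal 0 1)

open Nat in
/-- The Poisson pmf with rate `exp t`, written with `exp (t * n)` as in `biziplnPMF`. -/
noncomputable def poissonLogPMF (t : ℝ) (n : ℕ) : ℝ :=
  exp (-exp t) * exp (t * n) / n !

lemma measurable_poissonLogPMF (n : ℕ) : Measurable fun t => poissonLogPMF t n := by
  unfold poissonLogPMF
  fun_prop

lemma poissonLogPMF_nonneg (t : ℝ) (n : ℕ) : 0 ≤ poissonLogPMF t n := by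
  unfold poissonLogPMF
  positivity

open Nat in
lemma hasSum_natCast_mul_poisson (r : ℝ) :
    HasSum (fun n : ℕ => n * (exp (-r) * r ^ n / n !)) r := by
  have hshift (n : ℕ) : ((n + 1 : ℕ) : ℝ) * (exp (-r) * r ^ (n + 1) / (n + 1)!)
      = r * exp (-r) * (r ^ n / n !) := by
    rw [factorial_succ, pow_succ]
    push_cast
    field_simp
  have hexp : HasSum (fun n : ℕ => r ^ n / n !) (exp r) := by
    simpa [← exp_eq_exp_ℝ] using NormedSpace.expSeries_div_hasSum_exp r
  refine (hasSum_nat_add_iff' 1).mp ?_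
  simp only [Finset.range_one, Finset.sum_singleton, CharP.cast_eq_zero, zero_mul, sub_zero,
    hshift]
  simpa only [mul_assoc, ← exp_add, neg_add_cancel, exp_zero, mul_one]
    using hexp.mul_left (r * exp (-r))

lemma hasSum_natCast_mul_poissonLogPMF (t : ℝ) :
    HasSum (fun n : ℕ => n * poissonLogPMF t n) (exp t) := by
  simpa only [poissonLogPMF, mul_comm t, exp_nat_mul] using hasSum_natCast_mul_poisson (exp t)

lemma natCast_mul_zeroInflated (p P : ℝ) (n : ℕ) :
    (n : ℝ) * ((1 - p) * (if n = 0 then 1 else 0) + p * P) = p * (n * P) := by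
  split_ifs with hn
  · simp [hn]
  · ring

lemma hasSum_integral_of_nonneg {α ι : Type*} [MeasurableSpace α] {μ : Measure α} [Countable ι]
    {F : ι → α → ℝ} {f : α → ℝ} (hF_meas : ∀ i, AEStronglyMeasurable (F i) μ)
    (hF_nonneg : ∀ i a, 0 ≤ F i a) (hF_sum : ∀ a, HasSum (F · a) (f a)) (hf : Integrable f μ) :
    HasSum (fun i => ∫ a, F i a ∂μ) (∫ a, f a ∂μ) :=
  hasSum_integral_of_dominated_convergence F hF_meas
    (fun i => ae_of_all _ fun a => (Real.norm_of_nonneg (hF_nonneg i a)).le)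
    (ae_of_all _ fun a => (hF_sum a).summable)
    (hf.congr (ae_of_all _ fun a => (hF_sum a).tsum_eq.symm)) (ae_of_all _ hF_sum)

theorem hasSum_integral_mul_poissonLogPMF {α : Type*} [MeasurableSpace α] {μ : Measure α}
    {t₁ t₂ : α → ℝ} (ht₁ : Measurable t₁) (ht₂ : Measurable t₂)
    (hint : Integrable (fun a => exp (t₁ a + t₂ a)) μ) :
    HasSum (fun y : ℕ × ℕ =>
        ∫ a, (y.1 * poissonLogPMF (t₁ a) y.1) * (y.2 * poissonLogPMF (t₂ a) y.2) ∂μ)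
      (∫ a, exp (t₁ a + t₂ a) ∂μ) := by
  have hterm_nonneg (t : ℝ) (n : ℕ) : 0 ≤ (n : ℝ) * poissonLogPMF t n :=
    mul_nonneg n.cast_nonneg (poissonLogPMF_nonneg t n)
  refine hasSum_integral_of_nonneg (fun y => ?_) (fun y a => ?_) (fun a => ?_) hint
  · exact (((measurable_poissonLogPMF y.1).comp ht₁).const_mul _).mul
      (((measurable_poissonLogPMF y.2).comp ht₂).const_mul _) |>.aestronglyMeasurable
  · exact mul_nonneg (hterm_nonneg _ _) (hterm_nonneg _ _)
  · have h₁ := hasSum_natCast_mul_poissonLogPMF (t₁ a)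
    have h₂ := hasSum_natCast_mul_poissonLogPMF (t₂ a)
    rw [exp_add]
    exact h₁.mul h₂ (h₁.summable.mul_of_nonneg h₂.summable (hterm_nonneg _) (hterm_nonneg _))

section Gaussian

variable {ι : Type*} [Fintype ι] (m : ℝ) (v : NNReal) (a : ι → ℝ)

lemma integrable_exp_sum_mul_pi_gaussianReal :
    Integrable (fun w : ι → ℝ => exp (∑ i, a i * w i))
      (Measure.pi fun _ => gaussianReal m v) := by
  simp only [exp_sum]
  exact Integrable.fintype_prod fun i => integrable_exp_mul_gaussianReal (a i)

lemma integral_exp_sum_mul_pi_gaussianReal :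
    ∫ w : ι → ℝ, exp (∑ i, a i * w i) ∂(Measure.pi fun _ => gaussianReal m v)
      = exp (∑ i, (m * a i + v * a i ^ 2 / 2)) := by
  simp only [exp_sum]
  rw [integral_fintype_prod_eq_prod (fun i x => exp (a i * x))]
  exact Finset.prod_congr rfl fun i _ => congrFun (mgf_id_gaussianReal (μ := m) (v := v)) (a i)

lemma integral_exp_sum_mul_pi_gaussianReal_zero_one :
    ∫ w : ι → ℝ, exp (∑ i, a i * w i) ∂(Measure.pi fun _ => gaussianReal 0 1)
      = exp ((∑ i, a i ^ 2) / 2) := by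
  simp [integral_exp_sum_mul_pi_gaussianReal, Finset.sum_div]

lemma sum_add_sq_div_two (b : ι → ℝ) :
    (∑ i, (a i + b i) ^ 2) / 2 = (∑ i, a i ^ 2) / 2 + (∑ i, b i ^ 2) / 2 + ∑ i, a i * b i := by
  simp only [Finset.sum_div, ← Finset.sum_add_distrib]
  exact Finset.sum_congr rfl fun i _ => by ring

end Gaussian

lemma natCast_mul_natCast_mul_biziplnPMF {q : ℕ} (c₁ c₂ : Fin q → ℝ) (pr₁ pr₂ μ₁ μ₂ : ℝ)
    (y₁ y₂ : ℕ) :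
    (y₁ : ℝ) * y₂ * biziplnPMF c₁ c₂ pr₁ pr₂ μ₁ μ₂ y₁ y₂
      = pr₁ * pr₂ * ∫ w, (y₁ * poissonLogPMF (μ₁ + ∑ i, c₁ i * w i) y₁)
          * (y₂ * poissonLogPMF (μ₂ + ∑ i, c₂ i * w i) y₂)
          ∂(Measure.pi fun _ : Fin q => gaussianReal 0 1) := by
  rw [biziplnPMF, ← integral_const_mul, ← integral_const_mul]
  congr 1
  funext w
  rw [mul_mul_mul_comm, natCast_mul_zeroInflated, natCast_mul_zeroInflated, poissonLogPMF,
    poissonLogPMF]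
  ring

theorem bizipln_covariance_general {q : ℕ} (c₁ c₂ : Fin q → ℝ)
    (pr₁ pr₂ μ₁ μ₂ : ℝ)
    (σ₁₂ E₁ E₂ : ℝ)
    (hσ₁₂ : σ₁₂ = ∑ i, c₁ i * c₂ i)
    (hE₁ : E₁ = pr₁ * exp (μ₁ + (∑ i, c₁ i ^ 2) / 2))
    (hE₂ : E₂ = pr₂ * exp (μ₂ + (∑ i, c₂ i ^ 2) / 2)) :
    (∑' y : ℕ × ℕ, (y.1 : ℝ) * (y.2 : ℝ) * biziplnPMF c₁ c₂ pr₁ pr₂ μ₁ μ₂ y.1 y.2)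
        - E₁ * E₂
      = E₁ * E₂ * (exp σ₁₂ - 1) := by
  set t₁ : (Fin q → ℝ) → ℝ := fun w => μ₁ + ∑ i, c₁ i * w i
  set t₂ : (Fin q → ℝ) → ℝ := fun w => μ₂ + ∑ i, c₂ i * w i
  have hlin : (fun w => exp (t₁ w + t₂ w))
      = fun w => exp (μ₁ + μ₂) * exp (∑ i, (c₁ i + c₂ i) * w i) := by
    ext w
    simp only [t₁, t₂, ← exp_add, add_mul, Finset.sum_add_distrib]
    ring_nf
  have hsum := (hasSum_integral_mul_poissonLogPMF (t₁ := t₁) (t₂ := t₂) (by fun_prop)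
    (by fun_prop) (by rw [hlin]; exact (integrable_exp_sum_mul_pi_gaussianReal 0 1 _).const_mul _))
  rw [tsum_congr fun y : ℕ × ℕ => natCast_mul_natCast_mul_biziplnPMF c₁ c₂ pr₁ pr₂ μ₁ μ₂ y.1 y.2,
    (hsum.mul_left (pr₁ * pr₂)).tsum_eq, hlin, integral_const_mul,
    integral_exp_sum_mul_pi_gaussianReal_zero_one, sum_add_sq_div_two, hE₁, hE₂, hσ₁₂]
  simp only [exp_add]
  ring

/-- In the bivariate zero-inflated Poisson log-normal model, the covariance satisfies
`Cov(Y₁, Y₂) = ∑ y₁·y₂·p(y₁,y₂) − E₁·E₂ = E₁·E₂·(e^{σ₁₂} − 1)`, where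
`σ₁₂ = c₁·c₂` and `E_j = π_j·exp(μ_j + ‖c_j‖²/2)`. -/
theorem bizipln_covariance {q : ℕ} (hq : 1 ≤ q) (c₁ c₂ : Fin q → ℝ)
    (pr₁ pr₂ μ₁ μ₂ : ℝ)
    (hpr₁ : pr₁ ∈ Set.Ioc (0 : ℝ) 1) (hpr₂ : pr₂ ∈ Set.Ioc (0 : ℝ) 1)
    (σ₁₂ E₁ E₂ : ℝ)
    (hσ₁₂ : σ₁₂ = ∑ i, c₁ i * c₂ i)
    (hE₁ : E₁ = pr₁ * exp (μ₁ + (∑ i, c₁ i ^ 2) / 2))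
    (hE₂ : E₂ = pr₂ * exp (μ₂ + (∑ i, c₂ i ^ 2) / 2)) :
    (∑' y : ℕ × ℕ, (y.1 : ℝ) * (y.2 : ℝ) * biziplnPMF c₁ c₂ pr₁ pr₂ μ₁ μ₂ y.1 y.2)
        - E₁ * E₂
      = E₁ * E₂ * (exp σ₁₂ - 1) :=
  bizipln_covariance_general c₁ c₂ pr₁ pr₂ μ₁ μ₂ σ₁₂ E₁ E₂ hσ₁₂ hE₁ hE₂
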